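/- arXiv:2101.00773 — 3 statements merged into one kernel-verified Lean document; each statement's English description precedes it below -/
import Mathlib

section
/- Observability from serology testing: in the SIR model with baseline serology, if the outputs i_d(t) and r_d(t) and their derivatives are known on an interval, η θ(t) + η_BI θ_B > 0 and θ_B η_BR > 0, then the full state is determined: i_u(t) = (i_d'(t) + γ i_d(t))/(η θ(t) + η_BI θ_B), r_u(t) = (r_d'(t) - γ i_d(t))/(θ_B η_BR), and s(t) = 1 - i_u(t) - r_u(t) - i_d(t) - r_d(t). -/
section

variable {𝕜 : Type*} [NontriviallyNormedField 𝕜] {f : 𝕜 → 𝕜} {t a c x : 𝕜}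

theorem eq_deriv_add_div_of_hasDerivAt_mul_sub (hf : HasDerivAt f (c * x - a) t) (hc : c ≠ 0) :
    x = (deriv f t + a) / c := by
  rw [hf.deriv, eq_div_iff hc]
  ring

theorem eq_deriv_sub_div_of_hasDerivAt_add_mul (hf : HasDerivAt f (a + c * x) t) (hc : c ≠ 0) :
    x = (deriv f t - a) / c := by
  rw [hf.deriv, eq_div_iff hc]
  ring

end

/-- Observability from serology testing: the full state is
determined from the outputs `i_d`, `r_d` and their derivatives. -/
theorem sir_observable_serology
    (γ η ηBI ηBR θB : ℝ) (θ s iu iD ru rD : ℝ → ℝ)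
    (hpos1 : ∀ t, 0 < η * θ t + ηBI * θB) (hpos2 : 0 < θB * ηBR)
    (hiD : ∀ t, HasDerivAt iD ((η * θ t + θB * ηBI) * iu t - γ * iD t) t)
    (hrD : ∀ t, HasDerivAt rD (γ * iD t + θB * ηBR * ru t) t)
    (hsum : ∀ t, s t + iu t + iD t + ru t + rD t = 1) :
    ∀ t, iu t = (deriv iD t + γ * iD t) / (η * θ t + ηBI * θB) ∧
         ru t = (deriv rD t - γ * iD t) / (θB * ηBR) ∧
         s t = 1 - iu t - ru t - iD t - rD t := by
  intro t
  refine ⟨?_, eq_deriv_sub_div_of_hasDerivAt_add_mul (hrD t) hpos2.ne', by linarith [hsum t]⟩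
  rw [mul_comm ηBI θB] at hpos1 ⊢
  exact eq_deriv_add_div_of_hasDerivAt_mul_sub (hiD t) (hpos1 t).ne'
end

section
/- Feedback law keeping total infections constant: along the extended SIR dynamics with symptoms, if at time t one has i_u(t) + i_d(t) = i_max and β s(t) i_u(t) = γ i_max, then choosing θ(t) = β (s(t) - i_u(t)) - γ - κ (assuming η = 1) makes the second derivative of i_u + i_d vanish: d²(i_u+i_d)/dt² = 0. -/
/-!
The feedback law `γ + θ + κ = β (s - i_u)` makes the incidence `β s i_u` stationary, since its
derivative is `β s i_u (β (s - i_u) - γ - θ - κ)`. The first derivative of `i_u + i_d` is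
`β s i_u - γ (i_u + i_d)`, so the second one is `-γ (β s i_u - γ (i_u + i_d))`, and this vanishes
because `β s i_u = γ i_max = γ (i_u + i_d)` at time `t`.
-/

theorem hasDerivAt_incidence {β γ κ θ' t : ℝ} {s iu : ℝ → ℝ}
    (hs : HasDerivAt s (-β * s t * iu t) t)
    (hiu : HasDerivAt iu (β * s t * iu t - (γ + θ' + κ) * iu t) t) :
    HasDerivAt (fun u => β * s u * iu u)
      (β * s t * iu t * (β * (s t - iu t) - γ - θ' - κ)) t := by
  refine ((hs.const_mul β).mul hiu).congr_deriv ?_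
  ring

theorem hasDerivAt_totalInfected {β γ κ θ' t : ℝ} {s iu iD : ℝ → ℝ}
    (hiu : HasDerivAt iu (β * s t * iu t - (γ + θ' + κ) * iu t) t)
    (hiD : HasDerivAt iD ((θ' + κ) * iu t - γ * iD t) t) :
    HasDerivAt (fun u => iu u + iD u) (β * s t * iu t - γ * (iu t + iD t)) t := by
  refine (hiu.add hiD).congr_deriv ?_
  ring

theorem sir_feedback_second_derivative_zero_general
    (β γ κ imax t : ℝ)
    (s iu iD θ : ℝ → ℝ)
    (hs : ∀ u, HasDerivAt s (-β * s u * iu u) u)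
    (hiu : ∀ u, HasDerivAt iu (β * s u * iu u - (γ + θ u + κ) * iu u) u)
    (hiD : ∀ u, HasDerivAt iD ((θ u + κ) * iu u - γ * iD u) u)
    (hmax : iu t + iD t = imax) (hhold : β * s t * iu t = γ * imax)
    (hθ : θ t = β * (s t - iu t) - γ - κ) :
    HasDerivAt (fun u => β * s u * iu u - γ * (iu u + iD u)) 0 t := by
  have hincidence := hasDerivAt_incidence (hs t) (hiu t)
  have htotal := hasDerivAt_totalInfected (hiu t) (hiD t)
  refine (hincidence.sub (htotal.const_mul γ)).congr_deriv ?_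
  rw [hθ, hmax, ← hhold]
  ring

/-- Feedback law keeping total infections constant: with
`θ(t) = β(s(t) - i_u(t)) - γ - κ` (and `η = 1`), the second derivative of
`i_u + i_d`, i.e. the derivative of `β s i_u - γ (i_u + i_d)`, vanishes. -/
theorem sir_feedback_second_derivative_zero
    (β γ κ imax t : ℝ) (hβ : 0 < β) (hγ : 0 < γ) (hκ : 0 < κ)
    (s iu iD θ : ℝ → ℝ)
    (hs : ∀ u, HasDerivAt s (-β * s u * iu u) u)
    (hiu : ∀ u, HasDerivAt iu (β * s u * iu u - (γ + θ u + κ) * iu u) u)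
    (hiD : ∀ u, HasDerivAt iD ((θ u + κ) * iu u - γ * iD u) u)
    (hmax : iu t + iD t = imax) (hhold : β * s t * iu t = γ * imax)
    (hθ : θ t = β * (s t - iu t) - γ - κ) :
    HasDerivAt (fun u => β * s u * iu u - γ * (iu u + iD u)) 0 t :=
  sir_feedback_second_derivative_zero_general β γ κ imax t s iu iD θ hs hiu hiD hmax hhold hθ
end

section
/- Linear decay of susceptibles on the holding arc: if s' = -β s i_u and i_u' + i_d' = 0 with i_u + i_d ≡ i_max and i_d' = (θ + κ) i_u - γ i_d where θ is the holding feedback law, then s'(t) = -γ i_max, so s(t) = s(t_B) - γ i_max (t - t_B). -/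
/-!
On the holding arc the infected total `i_u + i_d` is constant, so its derivative
`β s i_u - γ (i_u + i_d) = β s i_u - γ i_max` vanishes: the new infections `β s i_u` exactly
balance the recoveries `γ i_max`. Hence `s' = -β s i_u = -γ i_max` is constant and `s` is affine.
-/

open Set

theorem HasDerivAt.eq_zero_of_eqOn_Icc {F : Type*} [NormedAddCommGroup F] [NormedSpace ℝ F]
    {f : ℝ → F} {f' c : F} {a b t : ℝ} (hf : HasDerivAt f f' t) (hab : a < b)
    (ht : t ∈ Icc a b) (hc : EqOn f (fun _ ↦ c) (Icc a b)) : f' = 0 :=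
  (uniqueDiffOn_Icc hab t ht).eq_deriv _ hf.hasDerivWithinAt
    ((hasDerivWithinAt_const t _ c).congr hc (hc ht))

theorem eq_affine_of_hasDerivAt_const {E : Type*} [NormedAddCommGroup E] [NormedSpace ℝ E]
    {f : ℝ → E} {v : E} {a b : ℝ} (hf : ∀ t ∈ Icc a b, HasDerivAt f v t) :
    ∀ t ∈ Icc a b, f t = f a + (t - a) • v := by
  have haffine : ∀ t, HasDerivAt (fun t ↦ f a + (t - a) • v) v t := fun t ↦ by
    simpa using (((hasDerivAt_id t).sub_const a).smul_const v).const_add (f a)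
  exact eq_of_has_deriv_right_eq
    (fun t ht ↦ (hf t (Ico_subset_Icc_self ht)).hasDerivWithinAt)
    (fun t _ ↦ (haffine t).hasDerivWithinAt) (fun t ht ↦ (hf t ht).continuousAt.continuousWithinAt)
    (fun t _ ↦ (haffine t).continuousAt.continuousWithinAt) (by simp)

theorem sir_holding_arc_susceptible_linear_general
    (β γ κ imax tB tC : ℝ) (s iu iD θ : ℝ → ℝ)
    (hs : ∀ t ∈ Set.Icc tB tC, HasDerivAt s (-β * s t * iu t) t)
    (hiu : ∀ t ∈ Set.Icc tB tC,
      HasDerivAt iu (β * s t * iu t - (γ + θ t + κ) * iu t) t)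
    (hiD : ∀ t ∈ Set.Icc tB tC, HasDerivAt iD ((θ t + κ) * iu t - γ * iD t) t)
    (hsum : ∀ t ∈ Set.Icc tB tC, iu t + iD t = imax) :
    ∀ t ∈ Set.Icc tB tC, s t = s tB - γ * imax * (t - tB) := by
  rcases le_or_gt tC tB with hCB | hlt
  · rintro t ⟨hBt, htC⟩
    obtain rfl : t = tB := le_antisymm (htC.trans hCB) hBt
    ring
  have hbalance : ∀ t ∈ Icc tB tC, β * s t * iu t = γ * imax := fun t ht ↦ by
    have hderiv : HasDerivAt (iu + iD) (β * s t * iu t - γ * imax) t :=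
      ((hiu t ht).add (hiD t ht)).congr_deriv (by rw [← hsum t ht]; ring)
    linarith [hderiv.eq_zero_of_eqOn_Icc hlt ht hsum]
  have hs' : ∀ t ∈ Icc tB tC, HasDerivAt s (-(γ * imax)) t := fun t ht ↦
    (hs t ht).congr_deriv (by rw [neg_mul, neg_mul, hbalance t ht])
  intro t ht
  rw [eq_affine_of_hasDerivAt_const hs' t ht, smul_eq_mul]
  ring

/-- Linear decay of susceptibles on the holding arc:
if `i_u + i_d ≡ i_max` on `[t_B, t_C]`, then
`s(t) = s(t_B) - γ i_max (t - t_B)`. -/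
theorem sir_holding_arc_susceptible_linear
    (β γ κ imax tB tC : ℝ) (hβ : 0 < β) (hγ : 0 < γ) (hκ : 0 < κ)
    (hBC : tB ≤ tC) (s iu iD θ : ℝ → ℝ)
    (hs : ∀ t ∈ Set.Icc tB tC, HasDerivAt s (-β * s t * iu t) t)
    (hiu : ∀ t ∈ Set.Icc tB tC,
      HasDerivAt iu (β * s t * iu t - (γ + θ t + κ) * iu t) t)
    (hiD : ∀ t ∈ Set.Icc tB tC, HasDerivAt iD ((θ t + κ) * iu t - γ * iD t) t)
    (hsum : ∀ t ∈ Set.Icc tB tC, iu t + iD t = imax) :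
    ∀ t ∈ Set.Icc tB tC, s t = s tB - γ * imax * (t - tB) :=
  sir_holding_arc_susceptible_linear_general β γ κ imax tB tC s iu iD θ hs hiu hiD hsum
end
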